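/- Suppose V : [0,∞) → ℝ is continuous and piecewise C¹ with events at times t_0 < t_1 < t_2 < ⋯ (no accumulation point), V(t_k) ≥ ε² for each k ≥ 1, and on each interval [t_k, t_{k+1}) we have V'(t) ≤ −σΣ(t) whenever V(t) ≥ ε², where Σ(t) ≥ 𝒱 > 0 whenever V(t) ≥ ε², σ ∈ (0,1). Then there exists t̄ with V(t) ≤ ε² for all t ≥ t̄. -/
import Mathlib


/-- Event-triggered ultimate boundedness: let `t : ℕ → ℝ` be a strictly
increasing, unbounded sequence of event times, `V` continuous and piecewise
`C¹` on the event intervals, with `V(t_k) ≥ ε²` for all `k ≥ 1`, and suppose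
that on each interval `[t_k, t_{k+1})`, whenever `V ≥ ε²`, `V' ≤ −σΣ` with
`Σ ≥ 𝒱 > 0` whenever `V ≥ ε²` and `σ ∈ (0,1)`. Then `V` enters and stays in
the sublevel set `{V ≤ ε²}` in finite time. -/
theorem event_triggered_ultimate_boundedness
    (σ εsq 𝒱 : ℝ) (hσ : σ ∈ Set.Ioo (0 : ℝ) 1) (hε : 0 < εsq) (h𝒱 : 0 < 𝒱)
    (t : ℕ → ℝ) (ht : StrictMono t) (htop : Filter.Tendsto t Filter.atTop Filter.atTop)
    (V V' Sig : ℝ → ℝ)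
    (hVcont : ContinuousOn V (Set.Ici (t 0)))
    (hVk : ∀ k : ℕ, 1 ≤ k → εsq ≤ V (t k))
    (hderiv : ∀ k : ℕ, ∀ s ∈ Set.Ico (t k) (t (k + 1)),
      HasDerivWithinAt V (V' s) (Set.Ico (t k) (t (k + 1))) s)
    (hdec : ∀ k : ℕ, ∀ s ∈ Set.Ico (t k) (t (k + 1)), εsq ≤ V s → V' s ≤ -σ * Sig s)
    (hSig : ∀ s ∈ Set.Ici (t 0), εsq ≤ V s → 𝒱 ≤ Sig s) :
    ∃ tbar : ℝ, ∀ s, tbar ≤ s → V s ≤ εsq := by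
  obtain ⟨hσ0, hσ1⟩ := hσ
  -- right derivatives
  have hderivI : ∀ k : ℕ, ∀ s ∈ Set.Ico (t k) (t (k + 1)),
      HasDerivWithinAt V (V' s) (Set.Ici s) s := by
    intro k s hs
    refine (hderiv k s hs).mono_of_mem_nhdsWithin ?_
    have h1 : Set.Ico s (t (k + 1)) ∈ nhdsWithin s (Set.Ici s) := by
      rw [← Set.Ici_inter_Iio]
      exact Filter.inter_mem self_mem_nhdsWithin
        (nhdsWithin_le_nhds (Iio_mem_nhds hs.2))
    exact Filter.mem_of_superset h1 (fun z hz => ⟨le_trans hs.1 hz.1, hz.2⟩)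
  -- "stay below" barrier lemma
  have stay : ∀ k : ℕ, ∀ a ∈ Set.Ico (t k) (t (k + 1)), V a ≤ εsq →
      ∀ s ∈ Set.Icc a (t (k + 1)), V s ≤ εsq := by
    intro k a ha hVa s hs
    have ht0a : t 0 ≤ a := le_trans (ht.monotone (Nat.zero_le k)) ha.1
    have hsub : Set.Icc a (t (k + 1)) ⊆ Set.Ici (t 0) :=
      fun z hz => le_trans ht0a hz.1
    have := image_le_of_deriv_right_lt_deriv_boundary (f := V) (f' := V')
      (a := a) (b := t (k + 1)) (B := fun _ => εsq) (B' := fun _ => 0)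
      (hVcont.mono hsub)
      (fun x hx => hderivI k x ⟨le_trans ha.1 hx.1, hx.2⟩)
      hVa (fun x => hasDerivAt_const x εsq) ?_
    · exact this hs
    · intro x hx hVx
      have hxI : x ∈ Set.Ico (t k) (t (k + 1)) := ⟨le_trans ha.1 hx.1, hx.2⟩
      have h1 : V' x ≤ -σ * Sig x := hdec k x hxI (le_of_eq hVx.symm)
      have h2 : 𝒱 ≤ Sig x :=
        hSig x (le_trans ht0a hx.1) (le_of_eq hVx.symm)
      have h3 : -σ * Sig x ≤ -σ * 𝒱 := by nlinarith
      show V' x < 0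
      nlinarith
  by_cases hcase : ∃ k : ℕ, 1 ≤ k ∧ V (t k) ≤ εsq
  · -- once at or below the level set we stay there
    obtain ⟨k0, _, hk0⟩ := hcase
    have key : ∀ m : ℕ, V (t (k0 + m)) ≤ εsq := by
      intro m
      induction m with
      | zero => exact hk0
      | succ n ih =>
        have := stay (k0 + n) (t (k0 + n))
          ⟨le_refl _, ht (Nat.lt_succ_self _)⟩ ih (t (k0 + n + 1))
          ⟨le_of_lt (ht (Nat.lt_succ_self _)), le_refl _⟩
        exact this
    refine ⟨t k0, fun s hs => ?_⟩
    have hQ : ∃ n : ℕ, s < t (k0 + n) := by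
      obtain ⟨n, hn⟩ := (htop.eventually (Filter.eventually_gt_atTop s)).exists
      exact ⟨n, lt_of_lt_of_le hn (ht.monotone (Nat.le_add_left n k0))⟩
    classical
    set n0 := Nat.find hQ with hn0
    have hn0spec : s < t (k0 + n0) := Nat.find_spec hQ
    have hn0pos : n0 ≠ 0 := by
      intro h
      rw [h] at hn0spec
      simp at hn0spec
      exact absurd hs (not_le.mpr hn0spec)
    obtain ⟨m, hm⟩ := Nat.exists_eq_succ_of_ne_zero hn0pos
    have hmle : t (k0 + m) ≤ s := by
      have := Nat.find_min hQ (hn0 ▸ hm ▸ Nat.lt_succ_self m)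
      exact not_lt.mp this
    have hslt : s < t (k0 + m + 1) := by
      have : k0 + m + 1 = k0 + n0 := by omega
      rw [this]; exact hn0spec
    exact stay (k0 + m) (t (k0 + m)) ⟨le_refl _, ht (Nat.lt_succ_self _)⟩
      (key m) s ⟨hmle, le_of_lt hslt⟩
  · -- otherwise V (t k) > εsq for all k ≥ 1, leading to a contradiction
    exfalso
    push_neg at hcase
    have hgt : ∀ k : ℕ, 1 ≤ k → εsq < V (t k) := hcase
    -- V stays at or above εsq on each interval
    have below : ∀ k : ℕ, 1 ≤ k → ∀ s ∈ Set.Icc (t k) (t (k + 1)), εsq ≤ V s := by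
      intro k hk s hs
      by_contra hlt
      push_neg at hlt
      have hsne : s ≠ t (k + 1) := by
        intro h
        rw [h] at hlt
        exact absurd (hgt (k + 1) (by omega)) (not_lt.mpr (le_of_lt hlt))
      have hsI : s ∈ Set.Ico (t k) (t (k + 1)) := ⟨hs.1, lt_of_le_of_ne hs.2 hsne⟩
      have := stay k s hsI (le_of_lt hlt) (t (k + 1)) ⟨le_of_lt hsI.2, le_refl _⟩
      exact absurd (hgt (k + 1) (by omega)) (not_lt.mpr this)
    set c : ℝ := σ / 2 * 𝒱 with hc
    have hcpos : 0 < c := by positivity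
    -- decrease estimate on each interval
    have dec : ∀ k : ℕ, 1 ≤ k →
        V (t (k + 1)) ≤ V (t k) - c * (t (k + 1) - t k) := by
      intro k hk
      have ht0k : t 0 ≤ t k := ht.monotone (Nat.zero_le k)
      have hsub : Set.Icc (t k) (t (k + 1)) ⊆ Set.Ici (t 0) :=
        fun z hz => le_trans ht0k hz.1
      have hmain := image_le_of_deriv_right_lt_deriv_boundary (f := V) (f' := V')
        (a := t k) (b := t (k + 1))
        (B := fun x => V (t k) - c * (x - t k)) (B' := fun _ => -c)
        (hVcont.mono hsub) (fun x hx => hderivI k x hx)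
        (by simp)
        (fun x => by
          have h1 : HasDerivAt (fun x : ℝ => V (t k) - c * (x - t k)) (0 - c * 1) x := by
            exact (hasDerivAt_const x (V (t k))).sub
              (((hasDerivAt_id x).sub_const (t k)).const_mul c)
          simpa using h1)
        ?_
      · have := hmain (Set.right_mem_Icc.mpr (le_of_lt (ht (Nat.lt_succ_self k))))
        simpa using this
      · intro x hx _
        show V' x < -c
        have hxV : εsq ≤ V x := below k hk x ⟨hx.1, le_of_lt hx.2⟩
        have h1 : V' x ≤ -σ * Sig x := hdec k x hx hxV
        have h2 : 𝒱 ≤ Sig x := hSig x (le_trans ht0k hx.1) hxV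
        have h3 : -σ * Sig x ≤ -σ * 𝒱 := by nlinarith
        have h4 : -σ * 𝒱 < -c := by rw [hc]; nlinarith
        linarith
    -- telescoping
    have tele : ∀ n : ℕ, 1 ≤ n → V (t n) ≤ V (t 1) - c * (t n - t 1) := by
      intro n hn
      induction n with
      | zero => omega
      | succ m ih =>
        rcases Nat.lt_or_ge m 1 with hm | hm
        · interval_cases m
          simp
        · have h1 := dec m hm
          have h2 := ih hm
          linarith
    obtain ⟨n, hn1, hn2⟩ :=
      ((htop.eventually (Filter.eventually_ge_atTop
        (t 1 + (V (t 1) - εsq) / c + 1))).and (Filter.eventually_ge_atTop 1)).exists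
    have h1 := tele n hn2
    have h2 := hgt n hn2
    have h3 : c * (t n - t 1) ≥ c * ((V (t 1) - εsq) / c + 1) := by
      apply mul_le_mul_of_nonneg_left _ (le_of_lt hcpos)
      linarith
    have h4 : c * ((V (t 1) - εsq) / c + 1) = V (t 1) - εsq + c := by
      field_simp
    nlinarith
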